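/- The subalgebra H_1 of W_2, consisting of commutative bilinear operators A on the 2-dimensional symplectic space (E_2, <,>) satisfying <A(x,y),z> + <y,A(x,z)> = 0 for all x,y,z, equals the span of ξ_1−ξ_5, ξ_2−ξ_6, ξ_3, ξ_4; in particular H_1 coincides with S_2. -/

import Mathlib

section

variable (K : Type*) [Field K] [CharZero K]

/-- The 2-dimensional space `E₂`. -/
abbrev V2 := Fin 2 → K

/-- The basis `e 0, e 1` of `E₂`. -/
noncomputable def e (i : Fin 2) : V2 K := Pi.single i 1

/-- `W(2)`: the space of all bilinear maps on `E₂`. -/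
abbrev W := V2 K →ₗ[K] V2 K →ₗ[K] V2 K

/-- The basis elements `α_{ij}^k` of `W(2)`, `alpha i j k (e t) (e l) = δ_{it} δ_{jl} • e k`
(indices shifted to `0,1`). -/
noncomputable def alpha (i j k : Fin 2) : W K :=
  LinearMap.mk₂ K (fun x y => (x i * y j) • e K k)
    (fun x x' y => by simp [add_mul, add_smul])
    (fun c x y => by simp [smul_smul, mul_assoc])
    (fun x y y' => by simp [mul_add, add_smul])
    (fun c x y => by simp [smul_smul]; ring_nf)

/-- The multiplication of the conservative algebra `W(2)`:
`(A·B)(x,y) = A(e₁, B(x,y)) − B(A(e₁,x), y) − B(x, A(e₁,y))`. -/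
noncomputable def mulW (A B : W K) : W K :=
  LinearMap.mk₂ K
    (fun x y => A (e K 0) (B x y) - B (A (e K 0) x) y - B x (A (e K 0) y))
    (fun x x' y => by simp only [map_add, LinearMap.add_apply]; abel)
    (fun c x y => by simp only [map_smul, LinearMap.smul_apply, smul_sub])
    (fun x y y' => by simp only [map_add, LinearMap.add_apply]; abel)
    (fun c x y => by simp only [map_smul, LinearMap.smul_apply, smul_sub])

end

set_option maxSynthPendingDepth 3
set_option synthInstance.maxHeartbeats 1000000
set_option maxHeartbeats 1000000

section

variable (K : Type*) [Field K] [CharZero K]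

/-- The nondegenerate skew-symmetric form on `E₂`. -/
noncomputable def omega (x y : V2 K) : K := x 0 * y 1 - x 1 * y 0

end

/-!
For an endomorphism `f` of the symplectic plane, `⟨f y, z⟩ + ⟨y, f z⟩ = tr f · ⟨y, z⟩`
(in matrix form `fᵀJ + Jf = (tr f) J`), so the defining condition of `H₁` says exactly that
every `A(x, ·)` is traceless, i.e. `H₁ = S₂`. A commutative `A` has six structure constants,
tracelessness imposes two independent linear relations on them, and the four free constants
are the coordinates along `ξ₁ − ξ₅, ξ₂ − ξ₆, ξ₃, ξ₄`.
-/

section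

variable (K : Type*) [Field K]

lemma alpha_apply (i j k : Fin 2) (x y : V2 K) : alpha K i j k x y = (x i * y j) • e K k := rfl

lemma eq_smul_e_add_smul_e (x : V2 K) : x = x 0 • e K 0 + x 1 • e K 1 := by
  funext t; fin_cases t <;> simp [e]

lemma e_apply (i j : Fin 2) : e K i j = if j = i then 1 else 0 := by
  simp [e, Pi.single_apply]

lemma W.ext_e {A B : W K} (h : ∀ i j, A (e K i) (e K j) = B (e K i) (e K j)) : A = B :=
  LinearMap.ext_basis (Pi.basisFun K (Fin 2)) (Pi.basisFun K (Fin 2)) fun i j => by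
    simpa [e] using h i j

lemma apply_eq_smul_add_smul (f : V2 K →ₗ[K] V2 K) (y : V2 K) :
    f y = y 0 • f (e K 0) + y 1 • f (e K 1) := by
  conv_lhs => rw [eq_smul_e_add_smul_e K y]
  simp only [map_add, map_smul]

lemma trace_eq_apply_add_apply (f : V2 K →ₗ[K] V2 K) :
    LinearMap.trace K (V2 K) f = f (e K 0) 0 + f (e K 1) 1 := by
  rw [LinearMap.trace_eq_matrix_trace K (Pi.basisFun K (Fin 2)) f]
  simp [Matrix.trace, Fin.sum_univ_two, e]

lemma omega_map_add_omega_map (f : V2 K →ₗ[K] V2 K) (y z : V2 K) :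
    omega K (f y) z + omega K y (f z) = LinearMap.trace K (V2 K) f * omega K y z := by
  rw [apply_eq_smul_add_smul K f y, apply_eq_smul_add_smul K f z, trace_eq_apply_add_apply]
  simp only [omega, Pi.add_apply, Pi.smul_apply, smul_eq_mul]
  ring

lemma omega_e_zero_e_one : omega K (e K 0) (e K 1) = 1 := by
  simp [omega, e]

lemma forall_omega_map_add_omega_map_eq_zero_iff (f : V2 K →ₗ[K] V2 K) :
    (∀ y z, omega K (f y) z + omega K y (f z) = 0) ↔ LinearMap.trace K (V2 K) f = 0 := by
  simp only [omega_map_add_omega_map, mul_eq_zero]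
  refine ⟨fun h => ?_, fun h y z => Or.inl h⟩
  simpa [omega_e_zero_e_one] using h (e K 0) (e K 1)

/-- The space `S₂`. -/
def commTraceless : Submodule K (W K) where
  carrier := {A | (∀ x y, A x y = A y x) ∧ ∀ a, LinearMap.trace K (V2 K) (A a) = 0}
  add_mem' := fun ⟨hc, ht⟩ ⟨hc', ht'⟩ =>
    ⟨fun x y => by simp [hc x y, hc' x y], fun a => by simp [ht a, ht' a]⟩
  zero_mem' := ⟨fun _ _ => rfl, fun _ => by simp⟩
  smul_mem' := fun c _ ⟨hc, ht⟩ => ⟨fun x y => by simp [hc x y], fun a => by simp [ht a]⟩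

lemma eq_combination_of_mem_commTraceless {A : W K} (hA : A ∈ commTraceless K) :
    A = A (e K 0) (e K 0) 0 • (alpha K 0 0 0 - (alpha K 0 1 1 + alpha K 1 0 1))
      + A (e K 0) (e K 1) 0 • ((alpha K 0 1 0 + alpha K 1 0 0) - alpha K 1 1 1)
      + A (e K 1) (e K 1) 0 • alpha K 1 1 0 + A (e K 0) (e K 0) 1 • alpha K 0 0 1 := by
  obtain ⟨hcomm, htr⟩ := hA
  have hsymm : A (e K 1) (e K 0) = A (e K 0) (e K 1) := hcomm _ _
  have htr0 : A (e K 0) (e K 1) 1 = -A (e K 0) (e K 0) 0 :=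
    eq_neg_of_add_eq_zero_right (trace_eq_apply_add_apply K _ ▸ htr (e K 0))
  have htr1 : A (e K 1) (e K 1) 1 = -A (e K 0) (e K 1) 0 :=
    eq_neg_of_add_eq_zero_right (hsymm ▸ trace_eq_apply_add_apply K _ ▸ htr (e K 1))
  refine W.ext_e K fun i j => funext fun t => ?_
  fin_cases i <;> fin_cases j <;> fin_cases t <;> simp [alpha_apply, e_apply, hsymm, htr0, htr1]

lemma span_eq_commTraceless :
    Submodule.span K {alpha K 0 0 0 - (alpha K 0 1 1 + alpha K 1 0 1),
      (alpha K 0 1 0 + alpha K 1 0 0) - alpha K 1 1 1, alpha K 1 1 0, alpha K 0 0 1}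
      = commTraceless K := by
  refine le_antisymm (Submodule.span_le.2 ?_) fun A hA => ?_
  · rintro g (rfl | rfl | rfl | rfl) <;>
      exact ⟨fun x y => by
          simp only [LinearMap.sub_apply, LinearMap.add_apply, alpha_apply]; module,
        fun a => by simp [trace_eq_apply_add_apply, alpha_apply, e_apply]⟩
  · rw [eq_combination_of_mem_commTraceless K hA]
    refine add_mem (add_mem (add_mem ?_ ?_) ?_) ?_ <;>
      exact Submodule.smul_mem _ _ (Submodule.subset_span (by simp))

end

section

variable (K : Type*) [Field K] [CharZero K]

/-- The subalgebra `H₁` of `W₂`, consisting of the commutative bilinear operators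
`A` on the symplectic space `(E₂, ⟨,⟩)` with `⟨A(x,y),z⟩ + ⟨y,A(x,z)⟩ = 0`, equals
the span of `ξ₁−ξ₅, ξ₂−ξ₆, ξ₃, ξ₄`; in particular `H₁` coincides with `S₂`. -/
theorem H1_description :
    {A : W K | (∀ x y : V2 K, A x y = A y x) ∧
        ∀ x y z : V2 K, omega K (A x y) z + omega K y (A x z) = 0}
      = ↑(Submodule.span K {alpha K 0 0 0 - (alpha K 0 1 1 + alpha K 1 0 1),
          (alpha K 0 1 0 + alpha K 1 0 0) - alpha K 1 1 1,
          alpha K 1 1 0, alpha K 0 0 1}) ∧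
    {A : W K | (∀ x y : V2 K, A x y = A y x) ∧
        ∀ x y z : V2 K, omega K (A x y) z + omega K y (A x z) = 0}
      = {A : W K | (∀ x y : V2 K, A x y = A y x) ∧
        ∀ a : V2 K, LinearMap.trace K (V2 K) (A a) = 0} := by
  have hH : {A : W K | (∀ x y : V2 K, A x y = A y x) ∧
      ∀ x y z : V2 K, omega K (A x y) z + omega K y (A x z) = 0} = commTraceless K :=
    Set.ext fun A => and_congr_right fun _ =>
      forall_congr' fun x => forall_omega_map_add_omega_map_eq_zero_iff K (A x)
  exact ⟨by rw [hH, span_eq_commTraceless], hH⟩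

end
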